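/- For a fixed odd integer N ≥ 3, the grids G_{N,j,L} for 0 ≤ j ≤ N−2 and 0 ≤ L ≤ N−1 are pairwise disjoint: no interval belongs to two different grids G_{N,j,L} and G_{N,j',L'} with (j,L) ≠ (j',L'). -/
import Mathlib


open Set

/-- For a fixed odd `N ≥ 3` the grids `G_{N,j,L}`, `0 ≤ j ≤ N−2`,
`0 ≤ L ≤ N−1`, are pairwise disjoint: no interval belongs to two grids with different
parameters `(j, L)`. -/
theorem statement8 :
    ∀ N : ℕ, Odd N → 3 ≤ N →
      ∀ j j' L L' : ℕ, j ≤ N - 2 → j' ≤ N - 2 → L ≤ N - 1 → L' ≤ N - 1 →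
        ∀ i l i' l' : ℤ,
          i % ((N : ℤ) - 1) = (j : ℤ) → i' % ((N : ℤ) - 1) = (j' : ℤ) →
          Set.Ico ((2:ℝ) ^ i * ((l : ℝ) + (L : ℝ) / N))
              ((2:ℝ) ^ i * ((l : ℝ) + (L : ℝ) / N + 1)) =
            Set.Ico ((2:ℝ) ^ i' * ((l' : ℝ) + (L' : ℝ) / N))
              ((2:ℝ) ^ i' * ((l' : ℝ) + (L' : ℝ) / N + 1)) →
          j = j' ∧ L = L' := by
  intro N hodd hN j j' L L' hj hj' hL hL' i l i' l' hi hi' hset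
  have hNR : (3:ℝ) ≤ (N:ℝ) := by exact_mod_cast hN
  have hN0 : (0:ℝ) < (N:ℝ) := by linarith
  have h2i : (0:ℝ) < (2:ℝ) ^ i := zpow_pos (by norm_num) i
  have h2i' : (0:ℝ) < (2:ℝ) ^ i' := zpow_pos (by norm_num) i'
  have hlt : (2:ℝ) ^ i * ((l : ℝ) + (L : ℝ) / N) <
      (2:ℝ) ^ i * ((l : ℝ) + (L : ℝ) / N + 1) := by
    have : ((l : ℝ) + (L : ℝ) / N) < ((l : ℝ) + (L : ℝ) / N + 1) := by linarith
    exact mul_lt_mul_of_pos_left this h2i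
  rw [Set.Ico_eq_Ico_iff (Or.inl hlt)] at hset
  obtain ⟨h1, h2⟩ := hset
  have e1 : (2:ℝ) ^ i * ((l : ℝ) + (L : ℝ) / N + 1)
      = (2:ℝ) ^ i * ((l : ℝ) + (L : ℝ) / N) + (2:ℝ) ^ i := by ring
  have e2 : (2:ℝ) ^ i' * ((l' : ℝ) + (L' : ℝ) / N + 1)
      = (2:ℝ) ^ i' * ((l' : ℝ) + (L' : ℝ) / N) + (2:ℝ) ^ i' := by ring
  have hpow : (2:ℝ) ^ i = (2:ℝ) ^ i' := by
    rw [e1, e2, h1] at h2; linarith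
  have hii' : i = i' := zpow_right_injective₀ (a := (2:ℝ)) (by norm_num) (by norm_num) hpow
  have hjj' : j = j' := by
    have : (j : ℤ) = (j' : ℤ) := by rw [← hi, ← hi', hii']
    exact_mod_cast this
  refine ⟨hjj', ?_⟩
  rw [hii'] at h1
  have hx : (l : ℝ) + (L : ℝ) / N = (l' : ℝ) + (L' : ℝ) / N :=
    mul_left_cancel₀ (ne_of_gt h2i') h1
  have hNe : (N:ℝ) ≠ 0 := ne_of_gt hN0
  have key : (L : ℝ) - (L' : ℝ) = ((l' : ℝ) - (l : ℝ)) * N := by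
    field_simp at hx
    linarith
  have keyZ : (L : ℤ) - (L' : ℤ) = ((l' : ℤ) - l) * N := by exact_mod_cast key
  have hLlt : (L : ℤ) < N := by
    have : L < N := lt_of_le_of_lt hL (by omega)
    exact_mod_cast this
  have hL'lt : (L' : ℤ) < N := by
    have : L' < N := lt_of_le_of_lt hL' (by omega)
    exact_mod_cast this
  have hNZ : (0:ℤ) < (N:ℤ) := by exact_mod_cast (by omega : 0 < N)
  have hl0 : l' - l = 0 := by
    rcases lt_trichotomy (l' - l) 0 with h | h | h
    · nlinarith [(Nat.cast_nonneg L : (0:ℤ) ≤ L)]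
    · exact h
    · nlinarith [(Nat.cast_nonneg L' : (0:ℤ) ≤ L')]
  have : (L : ℤ) = (L' : ℤ) := by rw [hl0] at keyZ; linarith
  exact_mod_cast this
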